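/- Define C_{2/3} : [0,1]² → [0,1] by C_{2/3}(x,y) = x if 0 ≤ x ≤ (2/3)y; C_{2/3}(x,y) = (2/3)y if (2/3)y ≤ x ≤ 2/3; and C_{2/3}(x,y) = xy if 2/3 ≤ x ≤ 1. Then the supremum over all (x,y) ∈ [0,1]² of |C_{2/3}(x,y) − C_{2/3}(y,x)| equals 4/27, and this value is attained at (x,y) = (4/9, 2/3). -/
import Mathlib


/-- The Marshall copula `C_{2/3}`. -/
noncomputable def C23 : ℝ → ℝ → ℝ := fun x y =>
  if x ≤ (2 / 3) * y then x else if x ≤ 2 / 3 then (2 / 3) * y else x * y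

lemma C23_attain : |C23 (4 / 9) (2 / 3) - C23 (2 / 3) (4 / 9)| = 4 / 27 := by
  norm_num [C23, abs_of_nonneg]

set_option maxHeartbeats 1000000 in
lemma C23_bound {x y : ℝ} (hx : x ∈ Set.Icc (0:ℝ) 1) (hy : y ∈ Set.Icc (0:ℝ) 1) :
    |C23 x y - C23 y x| ≤ 4 / 27 := by
  obtain ⟨hx0, hx1⟩ := hx
  obtain ⟨hy0, hy1⟩ := hy
  rw [abs_le]
  simp only [C23]
  split_ifs <;>
    constructor <;>
    first
      | linarith
      | nlinarith [sq_nonneg (x - 2/3), sq_nonneg (y - 2/3), sq_nonneg (x - y),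
          mul_nonneg hx0 hy0,
          mul_nonneg hx0 (sub_nonneg.2 hy1), mul_nonneg hy0 (sub_nonneg.2 hx1)]

/-- the supremum over `[0,1]²` of `|C_{2/3}(x,y) − C_{2/3}(y,x)|` equals
`4/27`, and the value is attained at `(4/9, 2/3)`. -/
theorem C23_max_asymmetry :
    IsGreatest {d : ℝ | ∃ x ∈ Set.Icc (0:ℝ) 1, ∃ y ∈ Set.Icc (0:ℝ) 1,
      d = |C23 x y - C23 y x|} (4 / 27) ∧
    |C23 (4 / 9) (2 / 3) - C23 (2 / 3) (4 / 9)| = 4 / 27 := by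
  refine ⟨⟨⟨4/9, by norm_num, 2/3, by norm_num, C23_attain.symm⟩, ?_⟩, C23_attain⟩
  rintro d ⟨x, hx, y, hy, rfl⟩
  exact C23_bound hx hy
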